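/- Let A be an antisymmetric bilinear form on a real vector space E. For N ≥ 1 and X_1,…,X_N ∈ E, let f_i(ξ) = ξ(X_i) and g = ∏ f_i. Then the operator g((1/i)∇^A), defined via the Schwartz kernel e^{-(i/2)A(x,y)} g^∨(x-y), equals the symmetrization ((-i)^N/N!) Σ_{σ∈S_N} ∇^A_{X_{σ(1)}} ⋯ ∇^A_{X_{σ(N)}}. -/

import Mathlib

open Complex

noncomputable section

variable {n : ℕ}

/-- The magnetic covariant derivative `∇^A_X = ∂_X + (1/(2i)) A(·,X)` on `ℝⁿ`. -/
def nablaA (A : (Fin n → ℝ) →ₗ[ℝ] (Fin n → ℝ) →ₗ[ℝ] ℝ)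
    (X : Fin n → ℝ) (f : (Fin n → ℝ) → ℂ) : (Fin n → ℝ) → ℂ :=
  fun x => fderiv ℝ f x X + (1 / (2 * I)) * (A x X : ℝ) * f x

/-- The plain directional derivative `(1/i) ∂_X`. -/
def Dder (X : Fin n → ℝ) (f : (Fin n → ℝ) → ℂ) : (Fin n → ℝ) → ℂ :=
  fun x => (1 / I) * fderiv ℝ f x X

namespace GnablaAux

open Finset

/-- The iterated (1/i)-directional derivative in the second variable of a function on
`ℝⁿ × ℝⁿ`, one derivative for each entry of the list. -/
def Phi (v : ((Fin n → ℝ) × (Fin n → ℝ)) → ℂ) :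
    List (Fin n → ℝ) → ((Fin n → ℝ) × (Fin n → ℝ)) → ℂ
  | [] => v
  | W :: L => fun p => (1 / I) * fderiv ℝ (Phi v L) p (0, W)

@[simp] lemma Phi_nil (v : ((Fin n → ℝ) × (Fin n → ℝ)) → ℂ) : Phi v [] = v := rfl

@[simp] lemma Phi_cons (v : ((Fin n → ℝ) × (Fin n → ℝ)) → ℂ) (W : Fin n → ℝ)
    (L : List (Fin n → ℝ)) :
    Phi v (W :: L) = fun p => (1 / I) * fderiv ℝ (Phi v L) p (0, W) := rfl

section A

variable (A : (Fin n → ℝ) →ₗ[ℝ] (Fin n → ℝ) →ₗ[ℝ] ℝ)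

/-- Continuous bilinear version of `A`. -/
def Ac : (Fin n → ℝ) →L[ℝ] (Fin n → ℝ) →L[ℝ] ℝ :=
  LinearMap.toContinuousLinearMap
    { toFun := fun x => LinearMap.toContinuousLinearMap (A x)
      map_add' := fun x y => by ext z; simp
      map_smul' := fun c x => by ext z; simp }

@[simp] lemma Ac_apply (x y : Fin n → ℝ) : Ac A x y = A x y := rfl

lemma contDiff_bil : ContDiff ℝ (⊤ : ℕ∞) (fun p : (Fin n → ℝ) × (Fin n → ℝ) => ((A p.1 p.2 : ℝ) : ℂ)) := by
  have h : ContDiff ℝ (⊤ : ℕ∞) (fun p : (Fin n → ℝ) × (Fin n → ℝ) => Ac A p.1 p.2) :=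
    (Ac A).isBoundedBilinearMap.contDiff
  exact Complex.ofRealCLM.contDiff.comp h

lemma contDiff_lin (Z : Fin n → ℝ) :
    ContDiff ℝ (⊤ : ℕ∞) (fun y : Fin n → ℝ => ((A y Z : ℝ) : ℂ)) := by
  have h : ContDiff ℝ (⊤ : ℕ∞) (fun y : Fin n → ℝ =>
      (LinearMap.toContinuousLinearMap (A.flip Z)) y) :=
    (LinearMap.toContinuousLinearMap (A.flip Z)).contDiff
  exact Complex.ofRealCLM.contDiff.comp h

end A

section V

lemma fderiv_apply_symm {f : ((Fin n → ℝ) × (Fin n → ℝ)) → ℂ} (hf : ContDiff ℝ (⊤ : ℕ∞) f)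
    (p ξ w : (Fin n → ℝ) × (Fin n → ℝ)) :
    fderiv ℝ (fun q => fderiv ℝ f q w) p ξ = fderiv ℝ (fun q => fderiv ℝ f q ξ) p w := by
  have hd : Differentiable ℝ (fderiv ℝ f) :=
    (hf.fderiv_right (m := (⊤ : ℕ∞)) ((by simp))).differentiable (by simp)
  have key : ∀ z : (Fin n → ℝ) × (Fin n → ℝ),
      fderiv ℝ (fun q => fderiv ℝ f q z) p = (fderiv ℝ (fderiv ℝ f) p).flip z := by
    intro z
    have := fderiv_clm_apply (c := fderiv ℝ f) (u := fun _ => z) (hd p)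
      (differentiableAt_const _)
    simpa using this
  rw [key w, key ξ]
  exact (hf.contDiffAt.isSymmSndFDerivAt (by rw [minSmoothness_of_isRCLikeNormedField]; exact WithTop.coe_le_coe.mpr le_top)) ξ w

lemma contDiff_fderiv_apply {f : ((Fin n → ℝ) × (Fin n → ℝ)) → ℂ} (hf : ContDiff ℝ (⊤ : ℕ∞) f)
    (w : (Fin n → ℝ) × (Fin n → ℝ)) :
    ContDiff ℝ (⊤ : ℕ∞) (fun q => fderiv ℝ f q w) := by
  exact (hf.fderiv_right ((by simp))).clm_apply contDiff_const

lemma Phi_smooth {v : ((Fin n → ℝ) × (Fin n → ℝ)) → ℂ} (hv : ContDiff ℝ (⊤ : ℕ∞) v)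
    (L : List (Fin n → ℝ)) : ContDiff ℝ (⊤ : ℕ∞) (Phi v L) := by
  induction L with
  | nil => exact hv
  | cons W L ih =>
    rw [Phi_cons]
    exact contDiff_const.mul (contDiff_fderiv_apply ih (0, W))

lemma Phi_fderiv {v : ((Fin n → ℝ) × (Fin n → ℝ)) → ℂ} (hv : ContDiff ℝ (⊤ : ℕ∞) v)
    (L : List (Fin n → ℝ)) (ξ : (Fin n → ℝ) × (Fin n → ℝ)) :
    (fun p => fderiv ℝ (Phi v L) p ξ) = Phi (fun q => fderiv ℝ v q ξ) L := by
  induction L with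
  | nil => rfl
  | cons W L ih =>
    funext p
    have hsm := Phi_smooth hv L
    have h1 : fderiv ℝ (Phi v (W :: L)) p ξ
        = (1 / I) * fderiv ℝ (fun q => fderiv ℝ (Phi v L) q (0, W)) p ξ := by
      conv_lhs => rw [show Phi v (W :: L)
        = (fun q => (1 / I) * fderiv ℝ (Phi v L) q (0, W)) from rfl]
      rw [fderiv_const_mul ((contDiff_fderiv_apply hsm (0, W)).differentiable (by simp) p)]
      simp
    rw [h1, fderiv_apply_symm hsm p ξ (0, W), ih]
    rfl

lemma Phi_perm {v : ((Fin n → ℝ) × (Fin n → ℝ)) → ℂ} (hv : ContDiff ℝ (⊤ : ℕ∞) v)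
    {L L' : List (Fin n → ℝ)} (h : L.Perm L') : Phi v L = Phi v L' := by
  induction h with
  | nil => rfl
  | cons a h ih => rw [Phi_cons, Phi_cons, ih]
  | swap a b l =>
    funext p
    have hsm := Phi_smooth hv l
    have hab : ∀ (a b : Fin n → ℝ) (p : (Fin n → ℝ) × (Fin n → ℝ)),
        Phi v (a :: b :: l) p
          = (1 / I) * ((1 / I) * fderiv ℝ (fun q => fderiv ℝ (Phi v l) q (0, b)) p (0, a)) := by
      intro a b p
      have e : Phi v (a :: b :: l) p
          = (1 / I) * fderiv ℝ (fun q => (1 / I) * fderiv ℝ (Phi v l) q (0, b)) p (0, a) := rfl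
      rw [e, fderiv_const_mul ((contDiff_fderiv_apply hsm (0, b)).differentiable (by simp) p)]
      simp [mul_assoc]
    rw [hab, hab, fderiv_apply_symm hsm p (0, a) (0, b)]
  | trans h1 h2 ih1 ih2 => rw [ih1, ih2]

end V

section Main

variable (A : (Fin n → ℝ) →ₗ[ℝ] (Fin n → ℝ) →ₗ[ℝ] ℝ) (u : (Fin n → ℝ) → ℂ)

lemma contDiff_lin2 (Z : Fin n → ℝ) :
    ContDiff ℝ (⊤ : ℕ∞) (fun q : (Fin n → ℝ) × (Fin n → ℝ) => ((A Z q.2 : ℝ) : ℂ)) := by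
  have h2 : ContDiff ℝ (⊤ : ℕ∞) (fun y : Fin n → ℝ =>
      (LinearMap.toContinuousLinearMap (A Z)) y) :=
    (LinearMap.toContinuousLinearMap (A Z)).contDiff
  have h : ContDiff ℝ (⊤ : ℕ∞) (fun y : Fin n → ℝ => ((A Z y : ℝ) : ℂ)) :=
    Complex.ofRealCLM.contDiff.comp h2
  exact h.comp (contDiff_snd (E := Fin n → ℝ) (F := Fin n → ℝ))

lemma lin2_CLM (Z : Fin n → ℝ) :
    (fun q : (Fin n → ℝ) × (Fin n → ℝ) => ((A Z q.2 : ℝ) : ℂ))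
      = ⇑(Complex.ofRealCLM.comp ((LinearMap.toContinuousLinearMap (A Z)).comp
          (ContinuousLinearMap.snd ℝ (Fin n → ℝ) (Fin n → ℝ)))) := rfl

lemma fderiv_lin2_apply (Z : Fin n → ℝ) (p ξ : (Fin n → ℝ) × (Fin n → ℝ)) :
    fderiv ℝ (fun q : (Fin n → ℝ) × (Fin n → ℝ) => ((A Z q.2 : ℝ) : ℂ)) p ξ
      = ((A Z ξ.2 : ℝ) : ℂ) := by
  rw [lin2_CLM, ContinuousLinearMap.fderiv]
  rfl

lemma fderiv_const_mul_apply {E' : Type*} [NormedAddCommGroup E'] [NormedSpace ℝ E']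
    {w : E' → ℂ} {p : E'} (hw : DifferentiableAt ℝ w p) (c : ℂ) (ξ : E') :
    fderiv ℝ (fun q => c * w q) p ξ = c * fderiv ℝ w p ξ := by
  rw [fderiv_const_mul hw]; simp

lemma fderiv_mul_apply {E' : Type*} [NormedAddCommGroup E'] [NormedSpace ℝ E']
    {w₁ w₂ : E' → ℂ} {p : E'} (h1 : DifferentiableAt ℝ w₁ p) (h2 : DifferentiableAt ℝ w₂ p)
    (ξ : E') :
    fderiv ℝ (fun q => w₁ q * w₂ q) p ξ
      = w₁ p * fderiv ℝ w₂ p ξ + w₂ p * fderiv ℝ w₁ p ξ := by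
  rw [fderiv_fun_mul h1 h2]; simp

lemma fderiv_sum_apply'' {E' : Type*} [NormedAddCommGroup E'] [NormedSpace ℝ E']
    {ι : Type*} (s : Finset ι) {F : ι → E' → ℂ} {p : E'}
    (h : ∀ i ∈ s, DifferentiableAt ℝ (F i) p) (ξ : E') :
    fderiv ℝ (fun q => ∑ i ∈ s, F i q) p ξ = ∑ i ∈ s, fderiv ℝ (F i) p ξ := by
  rw [fderiv_fun_sum h]; simp

lemma Phi_mul_linear {v : ((Fin n → ℝ) × (Fin n → ℝ)) → ℂ} (hv : ContDiff ℝ (⊤ : ℕ∞) v) (c : ℂ)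
    (Z : Fin n → ℝ) :
    ∀ (N : ℕ) (Y : Fin N → (Fin n → ℝ)) (p : (Fin n → ℝ) × (Fin n → ℝ)),
    Phi (fun q => c * ((A Z q.2 : ℝ) : ℂ) * v q) (List.ofFn Y) p
      = c * (((A Z p.2 : ℝ) : ℂ) * Phi v (List.ofFn Y) p
          + ∑ j : Fin N, (1 / I) * ((A Z (Y j) : ℝ) : ℂ)
              * Phi v ((List.ofFn Y).eraseIdx (j : ℕ)) p) := by
  intro N
  induction N with
  | zero =>
    intro Y p
    simp only [List.ofFn_zero, Phi_nil, Finset.univ_eq_empty, Finset.sum_empty]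
    ring
  | succ N ih =>
    intro Y p
    have hY : List.ofFn Y = Y 0 :: List.ofFn (fun i => Y i.succ) := List.ofFn_succ (f := Y)
    set Y' : Fin N → (Fin n → ℝ) := fun i => Y i.succ with hY'def
    have hΦ' : ContDiff ℝ (⊤ : ℕ∞) (Phi v (List.ofFn Y')) := Phi_smooth hv _
    have hΦ'j : ∀ j : Fin N, ContDiff ℝ (⊤ : ℕ∞) (Phi v ((List.ofFn Y').eraseIdx (j : ℕ))) :=
      fun j => Phi_smooth hv _
    set D : ℂ := fderiv ℝ (Phi v (List.ofFn Y')) p (0, Y 0) with hD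
    set Dj : Fin N → ℂ := fun j => fderiv ℝ (Phi v ((List.ofFn Y').eraseIdx (j : ℕ))) p (0, Y 0)
      with hDj
    have hih : Phi (fun q => c * ((A Z q.2 : ℝ) : ℂ) * v q) (List.ofFn Y')
        = fun q => c * (((A Z q.2 : ℝ) : ℂ) * Phi v (List.ofFn Y') q
            + ∑ j : Fin N, (1 / I) * ((A Z (Y' j) : ℝ) : ℂ)
                * Phi v ((List.ofFn Y').eraseIdx (j : ℕ)) q) :=
      funext fun q => ih Y' q
    -- left hand side
    have hL : Phi (fun q => c * ((A Z q.2 : ℝ) : ℂ) * v q) (List.ofFn Y) p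
        = (1 / I) * fderiv ℝ (fun q => c * (((A Z q.2 : ℝ) : ℂ) * Phi v (List.ofFn Y') q
            + ∑ j : Fin N, (1 / I) * ((A Z (Y' j) : ℝ) : ℂ)
                * Phi v ((List.ofFn Y').eraseIdx (j : ℕ)) q)) p (0, Y 0) := by
      rw [hY]
      conv_lhs => rw [show Phi (fun q => c * ((A Z q.2 : ℝ) : ℂ) * v q)
        (Y 0 :: List.ofFn Y')
          = (fun p => (1 / I) * fderiv ℝ
              (Phi (fun q => c * ((A Z q.2 : ℝ) : ℂ) * v q) (List.ofFn Y')) p (0, Y 0)) from rfl]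
      rw [hih]
    have hd1 : DifferentiableAt ℝ
        (fun q : (Fin n → ℝ) × (Fin n → ℝ) => ((A Z q.2 : ℝ) : ℂ)) p :=
      (contDiff_lin2 A Z).differentiable (by simp) p
    have hd2 : DifferentiableAt ℝ (Phi v (List.ofFn Y')) p := hΦ'.differentiable (by simp) p
    have hdsum : ∀ j : Fin N, DifferentiableAt ℝ
        (fun q => (1 / I) * ((A Z (Y' j) : ℝ) : ℂ)
            * Phi v ((List.ofFn Y').eraseIdx (j : ℕ)) q) p := by
      intro j
      exact (differentiableAt_const _).mul ((hΦ'j j).differentiable (by simp) p)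
    have hstep : fderiv ℝ (fun q => c * (((A Z q.2 : ℝ) : ℂ) * Phi v (List.ofFn Y') q
            + ∑ j : Fin N, (1 / I) * ((A Z (Y' j) : ℝ) : ℂ)
                * Phi v ((List.ofFn Y').eraseIdx (j : ℕ)) q)) p (0, Y 0)
        = c * ((((A Z p.2 : ℝ) : ℂ) * D + Phi v (List.ofFn Y') p * ((A Z (Y 0) : ℝ) : ℂ))
            + ∑ j : Fin N, (1 / I) * ((A Z (Y' j) : ℝ) : ℂ) * Dj j) := by
      rw [fderiv_const_mul_apply (by
        exact (hd1.mul hd2).add (DifferentiableAt.fun_sum fun j _ => hdsum j))]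
      congr 1
      rw [fderiv_fun_add (hd1.fun_mul hd2) (DifferentiableAt.fun_sum fun j _ => hdsum j)]
      rw [ContinuousLinearMap.add_apply]
      congr 1
      · rw [fderiv_mul_apply hd1 hd2, fderiv_lin2_apply]
      · rw [fderiv_sum_apply'' Finset.univ (fun j _ => hdsum j)]
        refine Finset.sum_congr rfl (fun j _ => ?_)
        rw [fderiv_const_mul_apply ((hΦ'j j).differentiable (by simp) p)]
    -- right hand side pieces
    have hP : Phi v (List.ofFn Y) p = (1 / I) * D := by rw [hY]; rfl
    have hPj : ∀ j : Fin N,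
        Phi v ((List.ofFn Y).eraseIdx ((j.succ : Fin (N + 1)) : ℕ)) p = (1 / I) * Dj j := by
      intro j
      rw [hY]
      rfl
    have h0 : (List.ofFn Y).eraseIdx ((0 : Fin (N + 1)) : ℕ) = List.ofFn Y' := by
      rw [hY]; rfl
    rw [hL, hstep, Fin.sum_univ_succ, h0, hP]
    have hsum : ∑ j : Fin N, (1 / I) * ((A Z (Y j.succ) : ℝ) : ℂ)
          * Phi v ((List.ofFn Y).eraseIdx ((j.succ : Fin (N + 1)) : ℕ)) p
        = ∑ j : Fin N, (1 / I) * ((1 / I) * ((A Z (Y' j) : ℝ) : ℂ) * Dj j) := by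
      refine Finset.sum_congr rfl (fun j _ => ?_)
      rw [hPj j]
      ring
    rw [hsum, ← Finset.mul_sum]
    ring

/-- The base kernel `e^{-(i/2) A(x,y)} u(y)` as a function on the product space. -/
def v0 : ((Fin n → ℝ) × (Fin n → ℝ)) → ℂ :=
  fun p => Complex.exp (-(I / 2) * ((A p.1 p.2 : ℝ) : ℂ)) * u p.2

lemma v0_smooth (hu : ContDiff ℝ (⊤ : ℕ∞) u) : ContDiff ℝ (⊤ : ℕ∞) (v0 A u) := by
  exact ((contDiff_const.mul (contDiff_bil A)).cexp).mul (hu.comp contDiff_snd)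

lemma fderiv_v0_fst (hu : ContDiff ℝ (⊤ : ℕ∞) u) (p : (Fin n → ℝ) × (Fin n → ℝ)) (Z : Fin n → ℝ) :
    fderiv ℝ (v0 A u) p (Z, 0) = -(I / 2) * ((A Z p.2 : ℝ) : ℂ) * v0 A u p := by
  have hb := (Ac A).isBoundedBilinearMap.hasFDerivAt p
  have hbil : HasFDerivAt (fun q : (Fin n → ℝ) × (Fin n → ℝ) => ((A q.1 q.2 : ℝ) : ℂ))
      (Complex.ofRealCLM.comp ((Ac A).isBoundedBilinearMap.deriv p)) p :=
    Complex.ofRealCLM.hasFDerivAt.comp p hb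
  have h1 := hbil.const_mul (-(I / 2))
  have h2 := h1.cexp
  have h3 : HasFDerivAt (fun q : (Fin n → ℝ) × (Fin n → ℝ) => u q.2)
      ((fderiv ℝ u p.2).comp (ContinuousLinearMap.snd ℝ _ _)) p :=
    ((hu.differentiable (by simp) p.2).hasFDerivAt).comp p hasFDerivAt_snd
  have h4 := h2.mul h3
  have h5 : fderiv ℝ (v0 A u) p = _ := h4.fderiv
  show fderiv ℝ (v0 A u) p (Z, 0)
    = -(I / 2) * ((A Z p.2 : ℝ) : ℂ)
        * (Complex.exp (-(I / 2) * ((A p.1 p.2 : ℝ) : ℂ)) * u p.2)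
  rw [h5]
  simp [IsBoundedBilinearMap.deriv_apply]
  ring

/-- diagonal restriction of the iterated derivative of the kernel -/
def g (L : List (Fin n → ℝ)) : (Fin n → ℝ) → ℂ := fun x => Phi (v0 A u) L (x, x)

lemma g_smooth (hu : ContDiff ℝ (⊤ : ℕ∞) u) (L : List (Fin n → ℝ)) : ContDiff ℝ (⊤ : ℕ∞) (g A u L) := by
  exact (Phi_smooth (v0_smooth A u hu) L).comp (contDiff_id.prodMk contDiff_id)

lemma g_congr (hu : ContDiff ℝ (⊤ : ℕ∞) u) {L L' : List (Fin n → ℝ)}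
    (h : (L : Multiset (Fin n → ℝ)) = (L' : Multiset (Fin n → ℝ))) : g A u L = g A u L' := by
  unfold g
  rw [Phi_perm (v0_smooth A u hu) (Multiset.coe_eq_coe.1 h)]

/-- `g` as a function of the multiset of directions. -/
def gM (hu : ContDiff ℝ (⊤ : ℕ∞) u) (s : Multiset (Fin n → ℝ)) : (Fin n → ℝ) → ℂ :=
  Quot.liftOn s (fun L => g A u L) (fun _ _ h => g_congr A u hu (Multiset.coe_eq_coe.2 h))

@[simp] lemma gM_coe (hu : ContDiff ℝ (⊤ : ℕ∞) u) (L : List (Fin n → ℝ)) :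
    gM A u hu (L : Multiset (Fin n → ℝ)) = g A u L := rfl

/-- The conjugated covariant-derivative operator `(1/i) ∂_Z - (1/2) A(·,Z)` = `-i ∇^A_Z`. -/
def Sop (Z : Fin n → ℝ) (v : (Fin n → ℝ) → ℂ) : (Fin n → ℝ) → ℂ :=
  fun y => (1 / I) * fderiv ℝ v y Z - (1 / 2) * ((A y Z : ℝ) : ℂ) * v y

lemma Sop_eq_neg_I_nablaA (Z : Fin n → ℝ) (v : (Fin n → ℝ) → ℂ) :
    Sop A Z v = fun y => (-I) * nablaA A Z v y := by
  funext y
  simp only [Sop, nablaA]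
  have hI : I ≠ 0 := Complex.I_ne_zero
  field_simp
  linear_combination (2 * fderiv ℝ v y Z) * Complex.I_sq

lemma Sop_smooth {v : (Fin n → ℝ) → ℂ} (hv : ContDiff ℝ (⊤ : ℕ∞) v) (Z : Fin n → ℝ) :
    ContDiff ℝ (⊤ : ℕ∞) (Sop A Z v) := by
  exact (contDiff_const.mul ((hv.fderiv_right (by simp)).clm_apply contDiff_const)).sub
    ((contDiff_const.mul (contDiff_lin A Z)).mul hv)

lemma nablaA_smooth {v : (Fin n → ℝ) → ℂ} (hv : ContDiff ℝ (⊤ : ℕ∞) v) (Z : Fin n → ℝ) :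
    ContDiff ℝ (⊤ : ℕ∞) (nablaA A Z v) := by
  exact ((hv.fderiv_right (by simp)).clm_apply contDiff_const).add
    ((contDiff_const.mul (contDiff_lin A Z)).mul hv)

lemma Sop_sum {ι : Type*} (s : Finset ι) (F : ι → (Fin n → ℝ) → ℂ)
    (h : ∀ i ∈ s, Differentiable ℝ (F i)) (Z : Fin n → ℝ) (x : Fin n → ℝ) :
    Sop A Z (fun y => ∑ i ∈ s, F i y) x = ∑ i ∈ s, Sop A Z (F i) x := by
  have hfd : fderiv ℝ (fun y => ∑ i ∈ s, F i y) x = ∑ i ∈ s, fderiv ℝ (F i) x :=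
    fderiv_fun_sum (fun i hi => (h i hi).differentiableAt)
  simp only [Sop, hfd, ContinuousLinearMap.coe_sum', Finset.sum_apply, Finset.mul_sum]
  rw [← Finset.sum_sub_distrib]

lemma Sop_const_mul {v : (Fin n → ℝ) → ℂ} (hv : Differentiable ℝ v) (c : ℂ)
    (Z : Fin n → ℝ) (x : Fin n → ℝ) :
    Sop A Z (fun y => c * v y) x = c * Sop A Z v x := by
  simp only [Sop]
  rw [fderiv_const_mul_apply (hv x) c Z]
  ring

/-- The key commutation identity: applying `Sop Z` to the diagonal function `g L`. -/
lemma star (hu : ContDiff ℝ (⊤ : ℕ∞) u) (hA : ∀ x y, A x y = - A y x) (Z : Fin n → ℝ)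
    (N : ℕ) (Y : Fin N → (Fin n → ℝ)) (x : Fin n → ℝ) :
    Sop A Z (g A u (List.ofFn Y)) x
      = g A u (Z :: List.ofFn Y) x
        + (I / 2) * ∑ j : Fin N, ((A Z (Y j) : ℝ) : ℂ)
            * g A u ((List.ofFn Y).eraseIdx (j : ℕ)) x := by
  have hv0 := v0_smooth A u hu
  have hf := Phi_smooth hv0 (List.ofFn Y)
  have hAxZ : ((A x Z : ℝ) : ℂ) = -((A Z x : ℝ) : ℂ) := by
    rw [hA x Z]; push_cast; ring
  have hdiag : fderiv ℝ (g A u (List.ofFn Y)) x Z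
      = fderiv ℝ (Phi (v0 A u) (List.ofFn Y)) (x, x) (Z, 0)
        + fderiv ℝ (Phi (v0 A u) (List.ofFn Y)) (x, x) (0, Z) := by
    have hd : HasFDerivAt (fun x : Fin n → ℝ => ((x, x) : (Fin n → ℝ) × (Fin n → ℝ)))
        ((ContinuousLinearMap.id ℝ (Fin n → ℝ)).prod (ContinuousLinearMap.id ℝ (Fin n → ℝ)))
        x := ((ContinuousLinearMap.id ℝ (Fin n → ℝ)).hasFDerivAt).prodMk
          ((ContinuousLinearMap.id ℝ (Fin n → ℝ)).hasFDerivAt)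
    have hcomp := HasFDerivAt.comp (g := Phi (v0 A u) (List.ofFn Y))
      (f := fun z : Fin n → ℝ => ((z, z) : (Fin n → ℝ) × (Fin n → ℝ))) x
      ((hf.differentiable (by simp) (x, x)).hasFDerivAt) hd
    have e : g A u (List.ofFn Y)
        = (Phi (v0 A u) (List.ofFn Y)) ∘ (fun x => (x, x)) := rfl
    rw [e, hcomp.fderiv]
    have e2 : ((Z, Z) : (Fin n → ℝ) × (Fin n → ℝ)) = (Z, 0) + (0, Z) := by simp
    simp only [ContinuousLinearMap.comp_apply, ContinuousLinearMap.prod_apply,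
      ContinuousLinearMap.id_apply]
    rw [e2, map_add]
  have hsnd : fderiv ℝ (Phi (v0 A u) (List.ofFn Y)) (x, x) (0, Z)
      = I * g A u (Z :: List.ofFn Y) x := by
    have e : g A u (Z :: List.ofFn Y) x
        = (1 / I) * fderiv ℝ (Phi (v0 A u) (List.ofFn Y)) (x, x) (0, Z) := rfl
    rw [e, ← mul_assoc, mul_one_div, div_self Complex.I_ne_zero, one_mul]
  set S : ℂ := ∑ j : Fin N, ((A Z (Y j) : ℝ) : ℂ) * g A u ((List.ofFn Y).eraseIdx (j : ℕ)) x
    with hS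
  have hfst : fderiv ℝ (Phi (v0 A u) (List.ofFn Y)) (x, x) (Z, 0)
      = -(I / 2) * (((A Z x : ℝ) : ℂ) * g A u (List.ofFn Y) x + (1 / I) * S) := by
    have h1 : (fun p => fderiv ℝ (Phi (v0 A u) (List.ofFn Y)) p (Z, 0))
        = Phi (fun q => fderiv ℝ (v0 A u) q (Z, 0)) (List.ofFn Y) :=
      Phi_fderiv hv0 _ _
    have h2 : (fun q => fderiv ℝ (v0 A u) q (Z, 0))
        = fun q => -(I / 2) * ((A Z q.2 : ℝ) : ℂ) * v0 A u q :=
      funext fun q => fderiv_v0_fst A u hu q Z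
    have h3 := Phi_mul_linear A hv0 (-(I / 2)) Z N Y (x, x)
    have h4 : fderiv ℝ (Phi (v0 A u) (List.ofFn Y)) (x, x) (Z, 0)
        = Phi (fun q => -(I / 2) * ((A Z q.2 : ℝ) : ℂ) * v0 A u q) (List.ofFn Y) (x, x) := by
      rw [← h2, ← h1]
    rw [h4, h3]
    have hsum2 : ∑ j : Fin N, (1 / I) * ((A Z (Y j) : ℝ) : ℂ)
          * Phi (v0 A u) ((List.ofFn Y).eraseIdx (j : ℕ)) ((x, x))
        = (1 / I) * S := by
      rw [hS, Finset.mul_sum]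
      refine Finset.sum_congr rfl fun j _ => ?_
      have e3 : g A u ((List.ofFn Y).eraseIdx (j : ℕ)) x
          = Phi (v0 A u) ((List.ofFn Y).eraseIdx (j : ℕ)) (x, x) := rfl
      rw [e3]
      ring
    rw [← hsum2]
    rfl
  show (1 / I) * fderiv ℝ (g A u (List.ofFn Y)) x Z
      - (1 / 2) * ((A x Z : ℝ) : ℂ) * g A u (List.ofFn Y) x = _
  rw [hdiag, hsnd, hfst, hAxZ]
  simp only [one_div, Complex.inv_I]
  linear_combination (((A Z x : ℝ) : ℂ) * g A u (List.ofFn Y) x / 2 - I * S / 2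
    - g A u (Z :: List.ofFn Y) x) * Complex.I_sq

/-- folds of operators over lists -/
def SF (L : List (Fin n → ℝ)) (φ : (Fin n → ℝ) → ℂ) : (Fin n → ℝ) → ℂ :=
  (L.map (Sop A)).foldr (fun P f => P f) φ

def NF (L : List (Fin n → ℝ)) (φ : (Fin n → ℝ) → ℂ) : (Fin n → ℝ) → ℂ :=
  (L.map (nablaA A)).foldr (fun P f => P f) φ

def DF (L : List (Fin n → ℝ)) (φ : (Fin n → ℝ) → ℂ) : (Fin n → ℝ) → ℂ :=
  (L.map Dder).foldr (fun P f => P f) φ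

@[simp] lemma SF_nil (φ : (Fin n → ℝ) → ℂ) : SF A [] φ = φ := rfl
@[simp] lemma SF_cons (W : Fin n → ℝ) (L : List (Fin n → ℝ)) (φ : (Fin n → ℝ) → ℂ) :
    SF A (W :: L) φ = Sop A W (SF A L φ) := rfl
@[simp] lemma NF_nil (φ : (Fin n → ℝ) → ℂ) : NF A [] φ = φ := rfl
@[simp] lemma NF_cons (W : Fin n → ℝ) (L : List (Fin n → ℝ)) (φ : (Fin n → ℝ) → ℂ) :
    NF A (W :: L) φ = nablaA A W (NF A L φ) := rfl
@[simp] lemma DF_nil (φ : (Fin n → ℝ) → ℂ) : DF [] φ = φ := rfl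
@[simp] lemma DF_cons (W : Fin n → ℝ) (L : List (Fin n → ℝ)) (φ : (Fin n → ℝ) → ℂ) :
    DF (W :: L) φ = Dder W (DF L φ) := rfl

lemma SF_smooth {φ : (Fin n → ℝ) → ℂ} (hφ : ContDiff ℝ (⊤ : ℕ∞) φ) (L : List (Fin n → ℝ)) :
    ContDiff ℝ (⊤ : ℕ∞) (SF A L φ) := by
  induction L with
  | nil => exact hφ
  | cons W L ih => exact Sop_smooth A ih W

lemma NF_smooth {φ : (Fin n → ℝ) → ℂ} (hφ : ContDiff ℝ (⊤ : ℕ∞) φ) (L : List (Fin n → ℝ)) :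
    ContDiff ℝ (⊤ : ℕ∞) (NF A L φ) := by
  induction L with
  | nil => exact hφ
  | cons W L ih => exact nablaA_smooth A ih W

lemma SF_eq_NF {φ : (Fin n → ℝ) → ℂ} (hφ : ContDiff ℝ (⊤ : ℕ∞) φ) (L : List (Fin n → ℝ)) :
    SF A L φ = fun y => (-I) ^ L.length * NF A L φ y := by
  induction L with
  | nil => funext y; simp
  | cons W L ih =>
    funext y
    rw [SF_cons, ih]
    rw [show Sop A W (fun y => (-I) ^ L.length * NF A L φ y) y
      = (-I) ^ L.length * Sop A W (NF A L φ) y from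
        Sop_const_mul A ((NF_smooth A hφ L).differentiable (by simp)) _ W y]
    rw [show Sop A W (NF A L φ) y = (-I) * nablaA A W (NF A L φ) y from
      congrFun (Sop_eq_neg_I_nablaA A W (NF A L φ)) y]
    rw [NF_cons]
    rw [List.length_cons, pow_succ]
    ring

lemma DF_eq_Phi {v : ((Fin n → ℝ) × (Fin n → ℝ)) → ℂ} (hv : ContDiff ℝ (⊤ : ℕ∞) v)
    (L : List (Fin n → ℝ)) (x y : Fin n → ℝ) :
    DF L (fun z => v (x, z)) y = Phi v L (x, y) := by
  induction L generalizing y with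
  | nil => rfl
  | cons W L ih =>
    rw [DF_cons]
    have e : DF L (fun z => v (x, z)) = fun z => Phi v L (x, z) := funext fun z => ih z
    show (1 / I) * fderiv ℝ (DF L (fun z => v (x, z))) y W = _
    rw [e]
    have hinner : HasFDerivAt (fun z : Fin n → ℝ => ((x, z) : (Fin n → ℝ) × (Fin n → ℝ)))
        (ContinuousLinearMap.inr ℝ (Fin n → ℝ) (Fin n → ℝ)) y :=
      hasFDerivAt_prodMk_right x y
    have houter := ((Phi_smooth hv L).differentiable (by simp) (x, y)).hasFDerivAt
    have hcomp := houter.comp y hinner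
    have e2 : (fun z => Phi v L (x, z)) = (Phi v L) ∘ (fun z => (x, z)) := rfl
    rw [e2, hcomp.fderiv]
    simp only [ContinuousLinearMap.comp_apply, ContinuousLinearMap.inr_apply]
    rfl

end Main

section Comb

/-- multiset of values of an `ofFn` list -/
lemma msOfFn {α : Type*} {N : ℕ} (f : Fin N → α) :
    ((List.ofFn f : List α) : Multiset α) = Multiset.map f Finset.univ.val := by
  have h1 : (Finset.univ : Finset (Fin N)).val = ((List.finRange N : List (Fin N)) : Multiset _) := by
    rw [Fin.univ_def]
  rw [List.ofFn_eq_map, h1, Multiset.map_coe]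

lemma map_univ_erase {N : ℕ} {ι : Fin N ↪ Fin (N + 1)} {t : Fin (N + 1)}
    (h : ∀ m, (∃ j, ι j = m) ↔ m ≠ t) :
    Finset.map ι Finset.univ = Finset.univ.erase t := by
  ext m
  simp only [Finset.mem_map, Finset.mem_erase, Finset.mem_univ, true_and, and_true]
  exact (by simpa using h m)

def psiEmb {N : ℕ} (k : Fin (N + 1)) : Fin N ↪ Fin (N + 1) :=
  ⟨fun j => Equiv.swap 0 k j.succ, fun a b h => by
    simpa using Fin.succ_injective _ ((Equiv.swap 0 k).injective h)⟩

lemma psi_map_univ {N : ℕ} (k : Fin (N + 1)) :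
    Finset.map (psiEmb k) Finset.univ = Finset.univ.erase k := by
  apply map_univ_erase
  intro m
  constructor
  · rintro ⟨j, hj⟩
    intro hm
    subst hm
    simp only [psiEmb, Function.Embedding.coeFn_mk] at hj
    change (Equiv.swap (0 : Fin (N + 1)) m) j.succ = m at hj
    have h2 := congrArg (Equiv.swap (0 : Fin (N + 1)) m) hj
    rw [Equiv.swap_apply_self, Equiv.swap_apply_right] at h2
    exact Fin.succ_ne_zero j h2
  · intro hm
    have h0 : Equiv.swap (0 : Fin (N + 1)) k m ≠ 0 := by
      intro h
      apply hm
      have h2 := congrArg (Equiv.swap (0 : Fin (N + 1)) k) h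
      rw [Equiv.swap_apply_self, Equiv.swap_apply_left] at h2
      exact h2
    refine ⟨(Equiv.swap (0 : Fin (N + 1)) k m).pred h0, ?_⟩
    show Equiv.swap (0 : Fin (N + 1)) k (((Equiv.swap (0 : Fin (N + 1)) k m).pred h0).succ) = m
    rw [Fin.succ_pred, Equiv.swap_apply_self]

lemma msEraseIdx {α : Type*} : ∀ {N : ℕ} (Y : Fin N → α) (j : Fin N),
    (((List.ofFn Y).eraseIdx (j : ℕ) : List α) : Multiset α)
      = Multiset.map Y (Finset.univ.val.erase j) := by
  intro N
  induction N with
  | zero => exact fun Y j => j.elim0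
  | succ N ih =>
    intro Y j
    have huniv : (Finset.univ : Finset (Fin (N + 1))).val
        = (0 : Fin (N + 1)) ::ₘ Multiset.map Fin.succ (Finset.univ : Finset (Fin N)).val := by
      rw [Fin.univ_succ, Finset.cons_val, Finset.map_val]
      rfl
    induction j using Fin.cases with
    | zero =>
      rw [List.ofFn_succ]
      show ((List.ofFn fun i => Y i.succ : List α) : Multiset α) = _
      rw [msOfFn, huniv, Multiset.erase_cons_head]
      rw [Multiset.map_map]
      rfl
    | succ j =>
      rw [List.ofFn_succ]
      show ((Y 0 :: (List.ofFn fun i => Y i.succ).eraseIdx (j : ℕ) : List α) : Multiset α) = _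
      rw [← Multiset.cons_coe, ih (fun i => Y i.succ) j, huniv,
        Multiset.erase_cons_tail _ (Fin.succ_ne_zero j).symm]
      rw [Multiset.map_cons, ← Multiset.map_erase Fin.succ (Fin.succ_injective N) j]
      rw [Multiset.map_map]
      rfl

end Comb

section Assemble

variable (A : (Fin n → ℝ) →ₗ[ℝ] (Fin n → ℝ) →ₗ[ℝ] ℝ) (u : (Fin n → ℝ) → ℂ)

lemma cancel (hu : ContDiff ℝ (⊤ : ℕ∞) u) (hA : ∀ x y, A x y = - A y x) (N : ℕ)
    (X : Fin (N + 1) → (Fin n → ℝ)) (x : Fin n → ℝ) :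
    ∑ k : Fin (N + 1), ∑ j : Fin N,
        ((A (X k) (X (Equiv.swap 0 k j.succ)) : ℝ) : ℂ)
          * gM A u hu (Multiset.map X ((Finset.univ.val.erase k).erase (Equiv.swap 0 k j.succ))) x
      = 0 := by
  classical
  set T : Fin (N + 1) → Fin (N + 1) → ℂ := fun k m =>
    ((A (X k) (X m) : ℝ) : ℂ)
      * gM A u hu (Multiset.map X ((Finset.univ.val.erase k).erase m)) x with hT
  have hInner : ∀ k : Fin (N + 1),
      ∑ j : Fin N, ((A (X k) (X (Equiv.swap 0 k j.succ)) : ℝ) : ℂ)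
          * gM A u hu
              (Multiset.map X ((Finset.univ.val.erase k).erase (Equiv.swap 0 k j.succ))) x
        = ∑ m ∈ Finset.univ.erase k, T k m := by
    intro k
    rw [← psi_map_univ k, Finset.sum_map]
    rfl
  rw [Finset.sum_congr rfl fun k _ => hInner k]
  have hanti : ∀ k m : Fin (N + 1), T k m = - T m k := by
    intro k m
    simp only [hT]
    rw [hA (X k) (X m), Multiset.erase_comm]
    push_cast
    ring
  have hsymm : ∑ k : Fin (N + 1), ∑ m ∈ Finset.univ.erase k, T k m
      = ∑ m : Fin (N + 1), ∑ k ∈ Finset.univ.erase m, T k m := by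
    refine Finset.sum_comm' ?_
    intro a b
    simp only [Finset.mem_univ, Finset.mem_erase, true_and, and_true]
    exact ne_comm
  have hneg : ∑ m : Fin (N + 1), ∑ k ∈ Finset.univ.erase m, T k m
      = - ∑ m : Fin (N + 1), ∑ k ∈ Finset.univ.erase m, T m k := by
    rw [← Finset.sum_neg_distrib]
    refine Finset.sum_congr rfl fun m _ => ?_
    rw [← Finset.sum_neg_distrib]
    exact Finset.sum_congr rfl fun k _ => hanti k m
  have hfinal : ∑ k : Fin (N + 1), ∑ m ∈ Finset.univ.erase k, T k m
      = - ∑ k : Fin (N + 1), ∑ m ∈ Finset.univ.erase k, T k m := by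
    conv_lhs => rw [hsymm, hneg]
  have h2 : (∑ k : Fin (N + 1), ∑ m ∈ Finset.univ.erase k, T k m)
      + ∑ k : Fin (N + 1), ∑ m ∈ Finset.univ.erase k, T k m = 0 := by
    nth_rewrite 1 [hfinal]
    ring
  exact add_self_eq_zero.mp h2

lemma main (hu : ContDiff ℝ (⊤ : ℕ∞) u) (hA : ∀ x y, A x y = - A y x) :
    ∀ (N : ℕ) (X : Fin N → (Fin n → ℝ)) (x : Fin n → ℝ),
    ∑ σ : Equiv.Perm (Fin N), SF A (List.ofFn fun i => X (σ i)) u x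
      = (N.factorial : ℂ) * gM A u hu (Multiset.map X Finset.univ.val) x := by
  intro N
  induction N with
  | zero =>
    intro X x
    have hAxx : ((A x x : ℝ) : ℂ) = 0 := by
      have h1 := hA x x
      have h0 : A x x = 0 := by linarith
      rw [h0]; norm_num
    have hterm : ∀ σ : Equiv.Perm (Fin 0),
        SF A (List.ofFn fun i => X (σ i)) u x = u x := by
      intro σ
      rw [List.ofFn_zero]
      rfl
    rw [Finset.sum_congr rfl fun σ _ => hterm σ, Finset.sum_const]
    have hg : gM A u hu (Multiset.map X Finset.univ.val) x = u x := by
      have e0 : (Multiset.map X Finset.univ.val)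
          = (([] : List (Fin n → ℝ)) : Multiset (Fin n → ℝ)) := by simp
      rw [e0, gM_coe]
      show Complex.exp (-(I / 2) * ((A x x : ℝ) : ℂ)) * u x = u x
      rw [hAxx]
      simp
    rw [hg]
    simp [Finset.card_univ]
  | succ N ih =>
    intro X x
    rw [← Equiv.sum_comp (Equiv.Perm.decomposeFin.symm)
      (fun σ => SF A (List.ofFn fun i => X (σ i)) u x), Fintype.sum_prod_type]
    set Zk : Fin (N + 1) → Fin N → (Fin n → ℝ) :=
      fun k a => X (Equiv.swap 0 k a.succ) with hZk
    have hterm : ∀ (k : Fin (N + 1)) (e : Equiv.Perm (Fin N)),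
        (List.ofFn fun i => X ((Equiv.Perm.decomposeFin.symm (k, e)) i))
          = X k :: List.ofFn (fun a => Zk k (e a)) := by
      intro k e
      rw [List.ofFn_succ]
      congr 1
      · rw [Equiv.Perm.decomposeFin_symm_apply_zero]
      · refine congrArg _ (funext fun i => ?_)
        rw [Equiv.Perm.decomposeFin_symm_apply_succ]
    have hgZk : ∀ k, gM A u hu (Multiset.map (Zk k) Finset.univ.val)
        = g A u (List.ofFn (Zk k)) := by
      intro k
      rw [← msOfFn, gM_coe]
    have hpsi_val : ∀ k : Fin (N + 1),
        Multiset.map (fun j : Fin N => Equiv.swap (0 : Fin (N + 1)) k j.succ)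
            (Finset.univ : Finset (Fin N)).val
          = Finset.univ.val.erase k := by
      intro k
      have h1 := congrArg Finset.val (psi_map_univ k)
      rw [Finset.map_val, Finset.erase_val] at h1
      exact h1
    have hfull : ∀ k, g A u (X k :: List.ofFn (Zk k)) x
        = gM A u hu (Multiset.map X Finset.univ.val) x := by
      intro k
      rw [← gM_coe A u hu (X k :: List.ofFn (Zk k))]
      congr 1
      rw [← Multiset.cons_coe, msOfFn]
      have h2 : Multiset.map (Zk k) (Finset.univ : Finset (Fin N)).val
          = Multiset.map X (Multiset.map
              (fun j : Fin N => Equiv.swap (0 : Fin (N + 1)) k j.succ) Finset.univ.val) := by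
        rw [Multiset.map_map]
        rfl
      rw [h2, hpsi_val k, ← Multiset.map_cons, Multiset.cons_erase]
      exact Finset.mem_univ k
    have hcorr : ∀ (k : Fin (N + 1)) (j : Fin N),
        g A u ((List.ofFn (Zk k)).eraseIdx (j : ℕ)) x
          = gM A u hu (Multiset.map X
              ((Finset.univ.val.erase k).erase (Equiv.swap 0 k j.succ))) x := by
      intro k j
      rw [← gM_coe A u hu]
      congr 1
      rw [msEraseIdx (Zk k) j]
      have h2 : Multiset.map (Zk k) ((Finset.univ : Finset (Fin N)).val.erase j)
          = Multiset.map X (Multiset.map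
              (fun j' : Fin N => Equiv.swap (0 : Fin (N + 1)) k j'.succ)
              (Finset.univ.val.erase j)) := by
        rw [Multiset.map_map]
        rfl
      rw [h2, Multiset.map_erase (fun j' : Fin N => Equiv.swap (0 : Fin (N + 1)) k j'.succ)
        (fun a b hab => by
          simpa using Fin.succ_injective _ ((Equiv.swap (0 : Fin (N + 1)) k).injective hab))
        j, hpsi_val k]
    have hstep2 : ∀ k : Fin (N + 1),
        ∑ e : Equiv.Perm (Fin N),
            SF A (List.ofFn fun i => X ((Equiv.Perm.decomposeFin.symm (k, e)) i)) u x
          = (N.factorial : ℂ) * (gM A u hu (Multiset.map X Finset.univ.val) x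
              + (I / 2) * ∑ j : Fin N, ((A (X k) (X (Equiv.swap 0 k j.succ)) : ℝ) : ℂ)
                  * gM A u hu (Multiset.map X
                      ((Finset.univ.val.erase k).erase (Equiv.swap 0 k j.succ))) x) := by
      intro k
      have h1 : ∀ e : Equiv.Perm (Fin N),
          SF A (List.ofFn fun i => X ((Equiv.Perm.decomposeFin.symm (k, e)) i)) u x
            = Sop A (X k) (SF A (List.ofFn fun a => Zk k (e a)) u) x := by
        intro e
        rw [hterm k e]
        rfl
      rw [Finset.sum_congr rfl fun e _ => h1 e]
      rw [← Sop_sum A Finset.univ _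
        (fun e _ => (SF_smooth A hu _).differentiable (by simp)) (X k) x]
      have h2 : (fun y => ∑ e : Equiv.Perm (Fin N),
            SF A (List.ofFn fun a => Zk k (e a)) u y)
          = fun y => (N.factorial : ℂ) * g A u (List.ofFn (Zk k)) y := by
        funext y
        rw [ih (Zk k) y, hgZk k]
      rw [h2, Sop_const_mul A ((g_smooth A u hu _).differentiable (by simp)) _ (X k) x]
      rw [star A u hu hA (X k) N (Zk k) x]
      have h3 : ∑ j : Fin N, ((A (X k) (Zk k j) : ℝ) : ℂ)
            * g A u ((List.ofFn (Zk k)).eraseIdx (j : ℕ)) x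
          = ∑ j : Fin N, ((A (X k) (X (Equiv.swap 0 k j.succ)) : ℝ) : ℂ)
            * gM A u hu (Multiset.map X
                ((Finset.univ.val.erase k).erase (Equiv.swap 0 k j.succ))) x := by
        refine Finset.sum_congr rfl fun j _ => ?_
        rw [hcorr k j]
      rw [hfull k, h3]
    rw [Finset.sum_congr rfl fun k _ => hstep2 k]
    simp only [mul_add]
    rw [Finset.sum_add_distrib, Finset.sum_const, Finset.card_univ, Fintype.card_fin]
    have hzero : ∑ k : Fin (N + 1), (N.factorial : ℂ)
        * ((I / 2) * ∑ j : Fin N, ((A (X k) (X (Equiv.swap 0 k j.succ)) : ℝ) : ℂ)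
            * gM A u hu (Multiset.map X
                ((Finset.univ.val.erase k).erase (Equiv.swap 0 k j.succ))) x) = 0 := by
      rw [← Finset.mul_sum, ← Finset.mul_sum]
      rw [cancel A u hu hA N X x]
      ring
    rw [hzero, add_zero, nsmul_eq_mul]
    push_cast [Nat.factorial_succ]
    ring

end Assemble

end GnablaAux

theorem gnabla_eq_symmetrization
    (A : (Fin n → ℝ) →ₗ[ℝ] (Fin n → ℝ) →ₗ[ℝ] ℝ)
    (hA : ∀ x y, A x y = - A y x)
    (N : ℕ) (hN : 1 ≤ N) (X : Fin N → (Fin n → ℝ))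
    (u : (Fin n → ℝ) → ℂ) (hu : ContDiff ℝ (⊤ : ℕ∞) u) (x : Fin n → ℝ) :
    ((List.ofFn fun i => Dder (X i)).foldr (fun P f => P f)
        (fun y => Complex.exp (-(I / 2) * (A x y : ℝ)) * u y)) x
      = ((-I) ^ N / (N.factorial : ℂ)) *
          ∑ σ : Equiv.Perm (Fin N),
            ((List.ofFn fun i => nablaA A (X (σ i))).foldr (fun P f => P f) u) x := by
  classical
  have hv0 := GnablaAux.v0_smooth A u hu
  have hlist : (List.ofFn fun i => Dder (X i)) = (List.ofFn X).map Dder := by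
    rw [List.map_ofFn]
    rfl
  have key : GnablaAux.DF (List.ofFn X) (fun z => GnablaAux.v0 A u (x, z)) x
      = GnablaAux.gM A u hu (Multiset.map X Finset.univ.val) x := by
    rw [GnablaAux.DF_eq_Phi hv0 (List.ofFn X) x x]
    show GnablaAux.g A u (List.ofFn X) x = _
    rw [← GnablaAux.gM_coe A u hu, GnablaAux.msOfFn]
  rw [hlist]
  have hval : (((List.ofFn X).map Dder).foldr (fun P f => P f)
      (fun y => Complex.exp (-(I / 2) * ((A x y : ℝ) : ℂ)) * u y)) x
      = GnablaAux.gM A u hu (Multiset.map X Finset.univ.val) x := key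
  rw [hval]
  have hmain := GnablaAux.main A u hu hA N X x
  have hSFNF : ∀ σ : Equiv.Perm (Fin N),
      GnablaAux.SF A (List.ofFn fun i => X (σ i)) u x
        = (-I) ^ N * GnablaAux.NF A (List.ofFn fun i => X (σ i)) u x := by
    intro σ
    have h1 := congrFun (GnablaAux.SF_eq_NF A hu (List.ofFn fun i => X (σ i))) x
    rw [h1, List.length_ofFn]
  have hrhs : ∀ σ : Equiv.Perm (Fin N),
      ((List.ofFn fun i => nablaA A (X (σ i))).foldr (fun P f => P f) u) x
        = GnablaAux.NF A (List.ofFn fun i => X (σ i)) u x := by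
    intro σ
    have hlist2 : (List.ofFn fun i => nablaA A (X (σ i)))
        = (List.ofFn fun i => X (σ i)).map (nablaA A) := by
      rw [List.map_ofFn]
      rfl
    rw [hlist2]
    rfl
  have hsum : (N.factorial : ℂ) * GnablaAux.gM A u hu (Multiset.map X Finset.univ.val) x
      = (-I) ^ N * ∑ σ : Equiv.Perm (Fin N),
          ((List.ofFn fun i => nablaA A (X (σ i))).foldr (fun P f => P f) u) x := by
    rw [← hmain, Finset.mul_sum]
    refine Finset.sum_congr rfl fun σ _ => ?_
    rw [hSFNF σ, hrhs σ]
  have hfac : (N.factorial : ℂ) ≠ 0 := Nat.cast_ne_zero.mpr (Nat.factorial_ne_zero N)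
  rw [div_mul_eq_mul_div, eq_div_iff hfac]
  linear_combination hsum

end
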